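/- Define Q(x) := ∫_x^∞ (1/√(2π))·e^{−y²/2} dy. Let a > 0, τ ∈ ℝ, and p₀, p₁ ∈ (0,1) with p₀ + p₁ = 1. With ω_L := a·√L, the sequence L ↦ −(1/L)·log( p₀·Q(ω_L + τ/ω_L) + p₁·Q(ω_L − τ/ω_L) ) converges to a²/2 as L → ∞ (L ranging over positive integers). -/

import Mathlib

/-!
Bounding the Gaussian density below by `e^{-(x+1)²/2}` on `(x, x+1]` and above by
`e^{-x²/2 + x - y}` on `(x, ∞)` (for `x ≥ 1`) gives `-log Q(x) ~ x²/2`. Both arguments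
`ω_L ± τ/ω_L` have square `a²L + O(1)`, and the error probability lies between
`p₁·Q(ω_L + |τ|/ω_L)` and `Q(ω_L - |τ|/ω_L)`, so the priors only shift `log` by a bounded amount.
-/

open Filter Topology

/-- The Gaussian tail function `Q(x) = ∫_x^∞ (1/√(2π))·e^{−y²/2} dy`. -/
noncomputable def gaussQ (x : ℝ) : ℝ :=
  ∫ y in Set.Ioi x, (1 / Real.sqrt (2 * Real.pi)) * Real.exp (-y ^ 2 / 2)

open MeasureTheory Real Set

lemma integrable_gaussQ_integrand :
    Integrable fun y : ℝ => 1 / √(2 * π) * exp (-y ^ 2 / 2) := by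
  convert (integrable_exp_neg_mul_sq (by norm_num : (0 : ℝ) < 1 / 2)).const_mul (1 / √(2 * π))
    using 3
  ring_nf

lemma gaussQ_antitone : Antitone gaussQ := fun _ _ hxy =>
  setIntegral_mono_set integrable_gaussQ_integrand.integrableOn
    (Eventually.of_forall fun _ => by positivity) (Ioi_subset_Ioi hxy).eventuallyLE

lemma gaussQ_le_of_one_le {x : ℝ} (hx : 1 ≤ x) :
    gaussQ x ≤ 1 / √(2 * π) * exp (-x ^ 2 / 2) :=
  calc gaussQ x
      ≤ ∫ y in Ioi x, 1 / √(2 * π) * exp (-x ^ 2 / 2 + x) * exp (-y) := by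
        refine setIntegral_mono_on integrable_gaussQ_integrand.integrableOn
          ((integrableOn_exp_neg_Ioi x).const_mul _) measurableSet_Ioi fun y hy => ?_
        rw [mul_assoc, ← exp_add]
        gcongr
        -- `y² - x² = (y - x)(y + x) ≥ 2(y - x)` as `x ≥ 1`
        nlinarith [mem_Ioi.mp hy]
    _ = 1 / √(2 * π) * exp (-x ^ 2 / 2) := by
        rw [integral_const_mul, integral_exp_neg_Ioi, mul_assoc, ← exp_add]
        ring_nf

lemma le_gaussQ_of_nonneg {x : ℝ} (hx : 0 ≤ x) :
    1 / √(2 * π) * exp (-(x + 1) ^ 2 / 2) ≤ gaussQ x :=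
  calc 1 / √(2 * π) * exp (-(x + 1) ^ 2 / 2)
      = ∫ _ in Ioc x (x + 1), 1 / √(2 * π) * exp (-(x + 1) ^ 2 / 2) := by
        simp [Real.volume_real_Ioc]
    _ ≤ ∫ y in Ioc x (x + 1), 1 / √(2 * π) * exp (-y ^ 2 / 2) := by
        refine setIntegral_mono_on (integrableOn_const (by simp))
          integrable_gaussQ_integrand.integrableOn measurableSet_Ioc fun y ⟨hxy, hyx⟩ => ?_
        gcongr
        nlinarith
    _ ≤ gaussQ x :=
        setIntegral_mono_set integrable_gaussQ_integrand.integrableOn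
          (Eventually.of_forall fun _ => by positivity) Ioc_subset_Ioi_self.eventuallyLE

lemma gaussQ_pos (x : ℝ) : 0 < gaussQ x :=
  calc 0 < 1 / √(2 * π) * exp (-(max x 0 + 1) ^ 2 / 2) := by positivity
    _ ≤ gaussQ (max x 0) := le_gaussQ_of_nonneg (le_max_right x 0)
    _ ≤ gaussQ x := gaussQ_antitone (le_max_left x 0)

lemma log_gaussQ_le {x : ℝ} (hx : 1 ≤ x) : log (gaussQ x) ≤ log (1 / √(2 * π)) - x ^ 2 / 2 := by
  have h := log_le_log (gaussQ_pos x) (gaussQ_le_of_one_le hx)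
  rw [log_mul (by positivity) (exp_pos _).ne', log_exp] at h
  linarith

lemma le_log_gaussQ {x : ℝ} (hx : 0 ≤ x) :
    log (1 / √(2 * π)) - (x + 1) ^ 2 / 2 ≤ log (gaussQ x) := by
  have h := log_le_log (by positivity) (le_gaussQ_of_nonneg hx)
  rw [log_mul (by positivity) (exp_pos _).ne', log_exp] at h
  linarith

lemma tendsto_neg_log_gaussQ_div_sq :
    Tendsto (fun x => -log (gaussQ x) / x ^ 2) atTop (𝓝 (1 / 2)) := by
  set C := log (1 / √(2 * π))
  have hinv : Tendsto (fun x : ℝ => x⁻¹) atTop (𝓝 0) := tendsto_inv_atTop_zero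
  have hlower : Tendsto (fun x : ℝ => 1 / 2 - C * x⁻¹ ^ 2) atTop (𝓝 (1 / 2)) := by
    convert ((hinv.pow 2).const_mul C).const_sub (1 / 2) using 2
    simp
  have hupper : Tendsto (fun x : ℝ => (1 + x⁻¹) ^ 2 / 2 - C * x⁻¹ ^ 2) atTop (𝓝 (1 / 2)) := by
    convert (((hinv.const_add 1).pow 2).div_const 2).sub ((hinv.pow 2).const_mul C) using 2
    simp
  refine tendsto_of_tendsto_of_tendsto_of_le_of_le' hlower hupper ?_ ?_ <;>
    filter_upwards [eventually_ge_atTop 1] with x hx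
  · have h := log_gaussQ_le hx
    rw [le_div_iff₀ (by positivity)]
    field_simp
    linarith
  · have h := le_log_gaussQ (zero_le_one.trans hx)
    rw [div_le_iff₀ (by positivity)]
    field_simp
    linarith

lemma tendsto_mul_sqrt_add_div_atTop {a : ℝ} (ha : 0 < a) (b : ℝ) :
    Tendsto (fun L => a * √L + b / (a * √L)) atTop atTop := by
  have h : Tendsto (fun L => a * √L) atTop atTop := tendsto_sqrt_atTop.const_mul_atTop ha
  simpa using h.atTop_add (tendsto_const_nhds.div_atTop h : Tendsto _ _ (𝓝 (0 : ℝ)))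

lemma tendsto_sq_mul_sqrt_add_div_div {a : ℝ} (ha : a ≠ 0) (b : ℝ) :
    Tendsto (fun L => (a * √L + b / (a * √L)) ^ 2 / L) atTop (𝓝 (a ^ 2)) := by
  have hinv : Tendsto (fun L : ℝ => L⁻¹) atTop (𝓝 0) := tendsto_inv_atTop_zero
  have h : Tendsto (fun L : ℝ => a ^ 2 + 2 * b * L⁻¹ + (b / a) ^ 2 * L⁻¹ ^ 2) atTop
      (𝓝 (a ^ 2)) := by
    convert ((hinv.const_mul (2 * b)).const_add (a ^ 2)).add ((hinv.pow 2).const_mul ((b / a) ^ 2))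
      using 2
    simp
  refine h.congr' ?_
  filter_upwards [eventually_gt_atTop 0] with L hL
  obtain ⟨s, hs, rfl⟩ : ∃ s, 0 < s ∧ L = s ^ 2 := ⟨√L, sqrt_pos.mpr hL, (sq_sqrt hL.le).symm⟩
  rw [sqrt_sq hs.le]
  field_simp
  ring

lemma tendsto_neg_log_gaussQ_div {a : ℝ} (ha : 0 < a) (b : ℝ) :
    Tendsto (fun L => -(1 / L) * log (gaussQ (a * √L + b / (a * √L)))) atTop
      (𝓝 (a ^ 2 / 2)) := by
  have hx := tendsto_mul_sqrt_add_div_atTop ha b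
  have h := (tendsto_neg_log_gaussQ_div_sq.comp hx).mul (tendsto_sq_mul_sqrt_add_div_div ha.ne' b)
  rw [one_div_mul_eq_div] at h
  refine h.congr' ?_
  filter_upwards [hx.eventually_gt_atTop 0] with L hL
  rw [Function.comp_apply, div_mul_div_cancel₀ (by positivity), neg_div, neg_mul, one_div_mul_eq_div]

section Mixture

variable {p₀ p₁ x t δ : ℝ}

lemma gaussQ_mixture_le (hp₀ : 0 ≤ p₀) (hp₁ : 0 ≤ p₁) (hsum : p₀ + p₁ = 1) (ht : |t| ≤ δ) :
    p₀ * gaussQ (x + t) + p₁ * gaussQ (x - t) ≤ gaussQ (x - δ) := by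
  obtain ⟨ht₁, ht₂⟩ := abs_le.mp ht
  calc p₀ * gaussQ (x + t) + p₁ * gaussQ (x - t)
      ≤ p₀ * gaussQ (x - δ) + p₁ * gaussQ (x - δ) := by
        gcongr <;> exact gaussQ_antitone (by linarith)
    _ = gaussQ (x - δ) := by rw [← add_mul, hsum, one_mul]

lemma le_gaussQ_mixture (hp₀ : 0 ≤ p₀) (hp₁ : 0 ≤ p₁) (ht : |t| ≤ δ) :
    p₁ * gaussQ (x + δ) ≤ p₀ * gaussQ (x + t) + p₁ * gaussQ (x - t) :=
  calc p₁ * gaussQ (x + δ) ≤ p₁ * gaussQ (x - t) := by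
        gcongr
        exact gaussQ_antitone (by linarith [neg_abs_le t])
    _ ≤ p₀ * gaussQ (x + t) + p₁ * gaussQ (x - t) :=
        le_add_of_nonneg_left (mul_nonneg hp₀ (gaussQ_pos _).le)

lemma gaussQ_mixture_pos (hp₀ : 0 ≤ p₀) (hp₁ : 0 < p₁) :
    0 < p₀ * gaussQ (x + t) + p₁ * gaussQ (x - t) :=
  add_pos_of_nonneg_of_pos (mul_nonneg hp₀ (gaussQ_pos _).le) (mul_pos hp₁ (gaussQ_pos _))

lemma log_gaussQ_mixture_le (hp₀ : 0 ≤ p₀) (hp₁ : 0 < p₁) (hsum : p₀ + p₁ = 1) (ht : |t| ≤ δ) :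
    log (p₀ * gaussQ (x + t) + p₁ * gaussQ (x - t)) ≤ log (gaussQ (x - δ)) :=
  log_le_log (gaussQ_mixture_pos hp₀ hp₁) (gaussQ_mixture_le hp₀ hp₁.le hsum ht)

lemma log_le_log_gaussQ_mixture (hp₀ : 0 ≤ p₀) (hp₁ : 0 < p₁) (ht : |t| ≤ δ) :
    log p₁ + log (gaussQ (x + δ)) ≤ log (p₀ * gaussQ (x + t) + p₁ * gaussQ (x - t)) := by
  rw [← log_mul hp₁.ne' (gaussQ_pos _).ne']
  exact log_le_log (mul_pos hp₁ (gaussQ_pos _)) (le_gaussQ_mixture hp₀ hp₁.le ht)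

end Mixture

/-- With `ω_L = a·√L`, the Bayesian error probability
`p₀·Q(ω_L + τ/ω_L) + p₁·Q(ω_L − τ/ω_L)` has error exponent
`lim_{L→∞} −(1/L)·log(…) = a²/2`, independent of `p₀, p₁, τ`. -/
theorem stmt18 (a τ p₀ p₁ : ℝ) (ha : 0 < a)
    (hp₀ : p₀ ∈ Set.Ioo (0 : ℝ) 1) (hp₁ : p₁ ∈ Set.Ioo (0 : ℝ) 1)
    (hsum : p₀ + p₁ = 1) :
    Tendsto (fun L : ℕ =>
        -(1 / (L : ℝ)) * Real.log
          (p₀ * gaussQ (a * Real.sqrt (L : ℝ) + τ / (a * Real.sqrt (L : ℝ))) +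
            p₁ * gaussQ (a * Real.sqrt (L : ℝ) - τ / (a * Real.sqrt (L : ℝ)))))
      atTop (nhds (a ^ 2 / 2)) := by
  have hlower := (tendsto_neg_log_gaussQ_div ha (-|τ|)).comp tendsto_natCast_atTop_atTop
  simp only [neg_div, ← sub_eq_add_neg] at hlower
  have hupper := (tendsto_one_div_atTop_nhds_zero_nat.neg.mul_const (log p₁)).add
    ((tendsto_neg_log_gaussQ_div ha |τ|).comp tendsto_natCast_atTop_atTop)
  rw [neg_zero, zero_mul, zero_add] at hupper
  refine tendsto_of_tendsto_of_tendsto_of_le_of_le' hlower hupper ?_ ?_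
  all_goals
    filter_upwards [eventually_gt_atTop 0] with L hL
    have hω : 0 < a * √L := by positivity
    have ht : |τ / (a * √L)| ≤ |τ| / (a * √L) := by rw [abs_div, abs_of_pos hω]
    have hneg : -(1 / (L : ℝ)) ≤ 0 := neg_nonpos.mpr (by positivity)
    simp only [Function.comp_apply]
  · exact mul_le_mul_of_nonpos_left (log_gaussQ_mixture_le hp₀.1.le hp₁.1 hsum ht) hneg
  · rw [← mul_add]
    exact mul_le_mul_of_nonpos_left (log_le_log_gaussQ_mixture hp₀.1.le hp₁.1 ht) hneg
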